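/- arXiv:1510.05852 — 5 statements merged into one kernel-verified Lean document; each statement's English description precedes it below -/
import Mathlib

section
/- For every integer n, the complete graph K_n contains ⌊n/2⌋ pairwise edge-disjoint spanning trees. -/
/-!
Walecki's construction. List the vertices of `ZMod n` in the zigzag order `0, 1, -1, 2, -2, …`:
consecutive terms sum to `1` or `0`, so every edge `{x, y}` of this Hamiltonian path has
`x + y ∈ {0, 1}`. Translating the path by `c` gives a spanning path whose edges have
`x + y ∈ {2c, 2c + 1}`, and for `c < n / 2` these pairs of residues are pairwise disjoint.
-/

open SimpleGraph

lemma SimpleGraph.isTree_pathGraph (n : ℕ) [NeZero n] : (pathGraph n).IsTree := by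
  obtain ⟨m, rfl⟩ := Nat.exists_eq_succ_of_ne_zero (NeZero.ne n)
  refine ⟨pathGraph_connected m, isAcyclic_iff_forall_adj_isBridge.mpr fun v w hvw => ?_⟩
  wlog hvw' : v.val + 1 = w.val generalizing v w
  · rw [Sym2.eq_swap]
    exact this w v hvw.symm (by rw [pathGraph_adj] at hvw; omega)
  refine isBridge_iff_forall_walk_mem_edges.mpr fun p => ?_
  obtain ⟨d, hd, hdv, hdw⟩ :=
    p.exists_boundary_dart {x | x.val ≤ v.val} (le_refl v.val) (by simp; omega)
  have hd_adj := pathGraph_adj.mp d.adj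
  simp only [Set.mem_ofPred_eq, not_le] at hdv hdw
  obtain rfl : d.fst = v := by ext; omega
  obtain rfl : d.snd = w := by ext; omega
  exact List.mem_map_of_mem hd

def zigzag (k : ℕ) : ℤ := if k % 2 = 0 then -(k / 2 : ℕ) else (k / 2 : ℕ) + 1

lemma zigzag_add_of_pathGraph_adj {n : ℕ} {a b : Fin n} (h : (pathGraph n).Adj a b) :
    zigzag a + zigzag b = 1 ∨ zigzag a + zigzag b = 0 := by
  rw [pathGraph_adj] at h
  unfold zigzag; split_ifs <;> omega

lemma zigzag_cast_injOn_Iio (n : ℕ) : Set.InjOn (fun k => (zigzag k : ZMod n)) (Set.Iio n) := by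
  intro k hk l hl h
  simp only [Set.mem_Iio] at hk hl
  have hdvd := (ZMod.intCast_eq_intCast_iff_dvd_sub _ _ _).mp h
  have : zigzag l - zigzag k = 0 := Int.eq_zero_of_abs_lt_dvd hdvd (by
    rw [abs_lt]; unfold zigzag; split_ifs <;> omega)
  unfold zigzag at this; split_ifs at this <;> omega

section

variable (n : ℕ) [NeZero n]

noncomputable def zigzagEquiv (c : ZMod n) : Fin n ≃ ZMod n :=
  Equiv.ofBijective (fun k => zigzag k + c) <| (Fintype.bijective_iff_injective_and_card _).mpr
    ⟨fun k l h => Fin.ext <| zigzag_cast_injOn_Iio n k.isLt l.isLt (add_right_cancel h), by simp⟩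

noncomputable def zigzagTree (c : ZMod n) : SimpleGraph (ZMod n) :=
  (pathGraph n).map (zigzagEquiv n c).toEmbedding

lemma isTree_zigzagTree (c : ZMod n) : (zigzagTree n c).IsTree :=
  (Iso.map _ _).isTree_iff.mp (isTree_pathGraph n)

variable {n}

lemma zigzagTree_adj_natCast {c : ℕ} {x y : ZMod n} (h : (zigzagTree n c).Adj x y) :
    ∃ s : ℕ, s / 2 = c ∧ x + y = s := by
  obtain ⟨a, b, hab, rfl, rfl⟩ := (map_adj _ _ _ _).mp h
  simp only [zigzagEquiv, Equiv.coe_toEmbedding, Equiv.ofBijective_apply]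
  obtain ⟨r, hr, hs⟩ : ∃ r : ℕ, r < 2 ∧ zigzag a + zigzag b = r := by
    rcases zigzag_add_of_pathGraph_adj hab with hs | hs
    exacts [⟨1, by norm_num, hs⟩, ⟨0, by norm_num, hs⟩]
  refine ⟨2 * c + r, by omega, ?_⟩
  have hs := congrArg (Int.cast : ℤ → ZMod n) hs
  push_cast at hs ⊢
  linear_combination hs

lemma disjoint_edgeSet_zigzagTree {i j : ℕ} (hi : 2 * i + 1 < n) (hj : 2 * j + 1 < n)
    (hij : i ≠ j) : Disjoint (zigzagTree n i).edgeSet (zigzagTree n j).edgeSet := by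
  rw [Set.disjoint_left]
  rintro ⟨x, y⟩ hxi hxj
  obtain ⟨s, rfl, hs⟩ := zigzagTree_adj_natCast hxi
  obtain ⟨t, rfl, ht⟩ := zigzagTree_adj_natCast hxj
  have hst : (s : ZMod n) = t := hs.symm.trans ht
  rw [← ZMod.val_cast_of_lt (by omega : s < n), hst, ZMod.val_cast_of_lt (by omega)] at hij
  exact hij rfl

end

/-- For every integer `n`, the complete graph `K_n` contains `⌊n/2⌋` pairwise
edge-disjoint spanning trees (Nash-Williams). -/
theorem stmt1 (n : ℕ) :
    ∃ T : Fin (n / 2) → SimpleGraph (Fin n),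
      (∀ i, (T i).IsTree) ∧
      Pairwise fun i j => Disjoint (T i).edgeSet (T j).edgeSet := by
  rcases Nat.eq_zero_or_pos n with rfl | hn
  · exact ⟨finZeroElim, finZeroElim, fun i => i.elim0⟩
  have : NeZero n := ⟨hn.ne'⟩
  let e : ZMod n ≃ Fin n := (ZMod.finEquiv n).symm.toEquiv
  refine ⟨fun i => (zigzagTree n (i : ℕ)).map e.toEmbedding, fun i => ?_, fun i j hij => ?_⟩
  · exact (Iso.map e _).isTree_iff.mp (isTree_zigzagTree n _)
  · dsimp only
    rw [edgeSet_map, edgeSet_map]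
    exact (Set.disjoint_image_iff e.toEmbedding.sym2Map.injective).mpr
      (disjoint_edgeSet_zigzagTree (by omega) (by omega) (Fin.val_injective.ne hij))
end

section
/- Let G be a graph on n₀ vertices that is the edge-disjoint union of q₀+1 spanning trees and in which three fixed vertices u₀, v₀, w₀ each have degree q₀+2 and span a triangle, where q₀+1 < ⌊(n₀-1)/2⌋. Then there exists a graph G' on n₀+2 vertices that is the edge-disjoint union of q₀+2 spanning trees, in which u₀, v₀, w₀ each have degree q₀+3 and still span a triangle. -/
/-!
Add two new vertices `u = inr 0` and `v = inr 1`, and pick distinct old vertices `a i`, `b i`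
outside `{u₀, v₀, w₀}`; there is room for them because `2 (q₀ + 1) + 3 ≤ n₀`. The `i`-th old
tree becomes a spanning tree of the new graph through the pendant edges `u (a i)` and `v (b i)`.
The new tree is the double star on the edge `uv` in which every `a i` hangs off `v` and every
other old vertex hangs off `u`, so it shares no edge with the old trees. Each of `u₀, v₀, w₀`
gains exactly the neighbour `u`. Both kinds of trees are recognised by connectivity and the edge
count `|E| + 1 = |V|`.
-/

open Function Set

@[simp]
theorem Sym2.map_inl_ne_mk_inr {V W : Type*} (e : Sym2 V) (j : W) (w : V ⊕ W) :
    Sym2.map .inl e ≠ s(.inr j, w) := fun he ↦ by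
  obtain ⟨a, -, ha⟩ := Sym2.mem_map.mp (he ▸ Sym2.mem_mk_left _ _)
  exact Sum.inl_ne_inr ha

theorem Function.Embedding.exists_forall_notMem {α V : Type*} [Fintype α] [Fintype V]
    [DecidableEq V] (s : Finset V) (h : Fintype.card α + s.card ≤ Fintype.card V) :
    ∃ f : α ↪ V, ∀ t, f t ∉ s := by
  obtain ⟨f⟩ : Nonempty (α ↪ ↥(sᶜ : Finset V)) :=
    Function.Embedding.nonempty_of_card_le (by simp; omega)
  exact ⟨f.trans (Embedding.subtype _), fun t ↦ Finset.mem_compl.mp (f t).2⟩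

namespace SimpleGraph

variable {V : Type*}

theorem isTree_iff_connected_and_ncard [Finite V] {G : SimpleGraph V} :
    G.IsTree ↔ G.Connected ∧ G.edgeSet.ncard + 1 = Nat.card V := by
  rw [isTree_iff_connected_and_card, Nat.card_coe_set_eq]

def extendTree (T : SimpleGraph V) (x y : V) : SimpleGraph (V ⊕ Fin 2) :=
  T.map Embedding.inl ⊔ edge (.inr 0) (.inl x) ⊔ edge (.inr 1) (.inl y)

def doubleStar (p : V → Fin 2) : SimpleGraph (V ⊕ Fin 2) :=
  fromEdgeSet (insert s(.inr 0, .inr 1) (range fun z ↦ s(.inr (p z), .inl z)))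

theorem edgeSet_extendTree (T : SimpleGraph V) (x y : V) :
    (extendTree T x y).edgeSet =
      insert s(.inr 0, .inl x) (insert s(.inr 1, .inl y) (Sym2.map .inl '' T.edgeSet)) := by
  ext e
  simp only [extendTree, edgeSet_sup, edgeSet_map, edgeSet_edge, mem_union, mem_insert_iff]
  aesop

theorem edgeSet_doubleStar (p : V → Fin 2) :
    (doubleStar p).edgeSet = insert s(.inr 0, .inr 1) (range fun z ↦ s(.inr (p z), .inl z)) := by
  rw [doubleStar, edgeSet_fromEdgeSet, sdiff_eq_left, Set.disjoint_left]
  aesop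

theorem neighborSet_extendTree_inl {T : SimpleGraph V} {x y z : V} (hx : z ≠ x) (hy : z ≠ y) :
    (extendTree T x y).neighborSet (.inl z) = .inl '' T.neighborSet z := by
  ext w
  simp [extendTree, edge_adj, hx, hy]

theorem neighborSet_doubleStar_inl (p : V → Fin 2) (z : V) :
    (doubleStar p).neighborSet (.inl z) = {.inr (p z)} := by
  ext w
  simp only [doubleStar, mem_neighborSet, fromEdgeSet_adj, mem_singleton_iff]
  aesop

theorem isTree_extendTree [Finite V] {T : SimpleGraph V} (hT : T.IsTree) (x y : V) :
    (extendTree T x y).IsTree := by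
  refine isTree_iff_connected_and_ncard.mpr
    ⟨(connected_iff_exists_forall_reachable _).mpr ⟨.inl x, ?_⟩, ?_⟩
  · have hinl (z : V) : (extendTree T x y).Reachable (.inl x) (.inl z) :=
      (hT.connected.preconnected x z).map ⟨Sum.inl, fun h ↦ by simp [extendTree, h]⟩
    rintro (z | j)
    · exact hinl z
    · fin_cases j
      · exact (Adj.reachable (by simp [extendTree, edge_adj])).symm
      · exact (hinl y).trans (Adj.reachable (by simp [extendTree, edge_adj])).symm
  · rw [edgeSet_extendTree, ncard_insert_of_notMem (by simp), ncard_insert_of_notMem (by simp),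
      ncard_image_of_injective _ (Sym2.map.injective Sum.inl_injective), Nat.card_sum,
      Nat.card_fin, ← (isTree_iff_connected_and_ncard.mp hT).2]

theorem isTree_doubleStar [Finite V] (p : V → Fin 2) : (doubleStar p).IsTree := by
  have hcentre (j : Fin 2) : (doubleStar p).Reachable (.inr 0) (.inr j) := by
    fin_cases j
    · rfl
    · exact Adj.reachable (by simp [doubleStar])
  refine isTree_iff_connected_and_ncard.mpr
    ⟨(connected_iff_exists_forall_reachable _).mpr ⟨.inr 0, ?_⟩, ?_⟩
  · rintro (z | j)
    · exact (hcentre (p z)).trans (Adj.reachable (by simp [doubleStar]))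
    · exact hcentre j
  · rw [edgeSet_doubleStar, ncard_insert_of_notMem (by simp),
      ncard_range_of_injective (fun z z' h ↦ by simp at h; exact h.2), Nat.card_sum,
      Nat.card_fin]

theorem disjoint_edgeSet_extendTree {T T' : SimpleGraph V} {x y x' y' : V}
    (h : Disjoint T.edgeSet T'.edgeSet) (hx : x ≠ x') (hy : y ≠ y') :
    Disjoint (extendTree T x y).edgeSet (extendTree T' x' y').edgeSet := by
  rw [edgeSet_extendTree, edgeSet_extendTree]
  simp [Set.disjoint_insert_left, Set.disjoint_insert_right, hx.symm, hy.symm,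
    disjoint_image_iff (Sym2.map.injective Sum.inl_injective), h]

theorem disjoint_edgeSet_extendTree_doubleStar {T : SimpleGraph V} {x y : V} {p : V → Fin 2}
    (hx : p x = 1) (hy : p y = 0) :
    Disjoint (extendTree T x y).edgeSet (doubleStar p).edgeSet := by
  rw [edgeSet_extendTree, edgeSet_doubleStar]
  simp only [Set.disjoint_left, mem_insert_iff, mem_range, mem_image]
  rintro _ (rfl | rfl | ⟨e, -, rfl⟩) (h | ⟨z, h⟩) <;>
    grind [Sym2.eq_iff, Sym2.map_inl_ne_mk_inr]

noncomputable def extendDecomposition {k : ℕ} (T : Fin k → SimpleGraph V) (a b : Fin k → V) :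
    Fin (k + 1) → SimpleGraph (V ⊕ Fin 2) :=
  Fin.cons (doubleStar ((range a).indicator 1)) fun i ↦ extendTree (T i) (a i) (b i)

variable {k : ℕ} {T : Fin k → SimpleGraph V} {a b : Fin k → V}

theorem isTree_extendDecomposition [Finite V] (hT : ∀ i, (T i).IsTree) :
    ∀ i, (extendDecomposition T a b i).IsTree :=
  Fin.cases (isTree_doubleStar _) fun i ↦ isTree_extendTree (hT i) _ _

theorem pairwise_disjoint_edgeSet_extendDecomposition
    (hT : Pairwise fun i j ↦ Disjoint (T i).edgeSet (T j).edgeSet)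
    (ha : Injective a) (hb : Injective b) (hab : ∀ i j, a i ≠ b j) :
    Pairwise fun i j ↦
      Disjoint (extendDecomposition T a b i).edgeSet (extendDecomposition T a b j).edgeSet := by
  have hdisj (i : Fin k) : Disjoint (extendTree (T i) (a i) (b i)).edgeSet
      (doubleStar ((range a).indicator 1)).edgeSet :=
    disjoint_edgeSet_extendTree_doubleStar (indicator_of_mem (mem_range_self i) 1)
      (indicator_of_notMem (by rintro ⟨j, hj⟩; exact hab j i hj) 1)
  refine pairwise_fin_succ_iff.mpr ⟨fun i ↦ hdisj i, fun i ↦ (hdisj i).symm, fun i j hij ↦ ?_⟩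
  exact disjoint_edgeSet_extendTree (hT hij) (ha.ne hij) (hb.ne hij)

theorem neighborSet_iSup_extendDecomposition_inl {z : V} (ha : ∀ i, a i ≠ z)
    (hb : ∀ i, b i ≠ z) :
    (⨆ i, extendDecomposition T a b i).neighborSet (.inl z) =
      insert (.inr 0) (.inl '' (⨆ i, T i).neighborSet z) := by
  have h0 : (extendDecomposition T a b 0).neighborSet (.inl z) = {.inr 0} := by
    simp [extendDecomposition, neighborSet_doubleStar_inl,
      indicator_of_notMem (fun ⟨i, hi⟩ ↦ ha i hi : z ∉ range a)]
  have hsucc (i : Fin k) : (extendDecomposition T a b i.succ).neighborSet (.inl z) =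
      .inl '' (T i).neighborSet z :=
    neighborSet_extendTree_inl (ha i).symm (hb i).symm
  ext w
  simp only [neighborSet_iSup, image_iUnion, mem_iUnion, Fin.exists_fin_succ, h0, hsucc,
    mem_insert_iff, mem_singleton_iff]

end SimpleGraph

open SimpleGraph

theorem stmt6_general {V : Type*} [Fintype V] (n₀ q₀ : ℕ)
    (hcard : Fintype.card V = n₀) (hq : q₀ + 1 < (n₀ - 1) / 2)
    (G : SimpleGraph V) (T : Fin (q₀ + 1) → SimpleGraph V)
    (htree : ∀ i, (T i).IsTree)
    (hdisj : Pairwise fun i j => Disjoint (T i).edgeSet (T j).edgeSet)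
    (hsup : (⨆ i, T i) = G)
    (u₀ v₀ w₀ : V)
    (ha1 : G.Adj u₀ v₀) (ha2 : G.Adj v₀ w₀) (ha3 : G.Adj u₀ w₀)
    (hd1 : (G.neighborSet u₀).ncard = q₀ + 2)
    (hd2 : (G.neighborSet v₀).ncard = q₀ + 2)
    (hd3 : (G.neighborSet w₀).ncard = q₀ + 2) :
    ∃ (G' : SimpleGraph (V ⊕ Fin 2)) (T' : Fin (q₀ + 2) → SimpleGraph (V ⊕ Fin 2)),
      (∀ i, (T' i).IsTree) ∧
      (Pairwise fun i j => Disjoint (T' i).edgeSet (T' j).edgeSet) ∧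
      (⨆ i, T' i) = G' ∧
      G'.Adj (Sum.inl u₀) (Sum.inl v₀) ∧
      G'.Adj (Sum.inl v₀) (Sum.inl w₀) ∧
      G'.Adj (Sum.inl u₀) (Sum.inl w₀) ∧
      (G'.neighborSet (Sum.inl u₀)).ncard = q₀ + 3 ∧
      (G'.neighborSet (Sum.inl v₀)).ncard = q₀ + 3 ∧
      (G'.neighborSet (Sum.inl w₀)).ncard = q₀ + 3 := by
  classical
  subst hsup
  set s : Finset V := {u₀, v₀, w₀}
  have hs : s.card ≤ 3 := Finset.card_le_three
  obtain ⟨f, hf⟩ :=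
    Function.Embedding.exists_forall_notMem (α := Fin (q₀ + 1) ⊕ Fin (q₀ + 1)) s (by simp; omega)
  set T' := extendDecomposition T (f ∘ .inl) (f ∘ .inr)
  have hN : ∀ z ∈ s, (⨆ i, T' i).neighborSet (.inl z) =
      insert (.inr 0) (.inl '' (⨆ i, T i).neighborSet z) := fun z hz ↦
    neighborSet_iSup_extendDecomposition_inl (fun _ h ↦ hf _ (h ▸ hz)) (fun _ h ↦ hf _ (h ▸ hz))
  have hadj : ∀ z ∈ s, ∀ w, (⨆ i, T i).Adj z w → (⨆ i, T' i).Adj (.inl z) (.inl w) :=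
    fun z hz w h ↦ by
      rw [← mem_neighborSet, hN z hz]
      exact mem_insert_of_mem _ (mem_image_of_mem _ h)
  have hdeg : ∀ z ∈ s, ((⨆ i, T' i).neighborSet (.inl z)).ncard =
      ((⨆ i, T i).neighborSet z).ncard + 1 := by
    intro z hz
    rw [hN z hz, ncard_insert_of_notMem (by simp), ncard_image_of_injective _ Sum.inl_injective]
  refine ⟨_, T', isTree_extendDecomposition htree,
    pairwise_disjoint_edgeSet_extendDecomposition hdisj (f.injective.comp Sum.inl_injective)
      (f.injective.comp Sum.inr_injective) (fun _ _ ↦ f.injective.ne Sum.inl_ne_inr), rfl,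
    hadj _ (by simp [s]) _ ha1, hadj _ (by simp [s]) _ ha2, hadj _ (by simp [s]) _ ha3,
    ?_, ?_, ?_⟩
  · rw [hdeg _ (by simp [s]), hd1]
  · rw [hdeg _ (by simp [s]), hd2]
  · rw [hdeg _ (by simp [s]), hd3]

/-- Inductive step: from a graph `G` on `n₀` vertices that is the edge-disjoint union of
`q₀+1` spanning trees, in which three fixed vertices `u₀, v₀, w₀` each have degree `q₀+2`
and span a triangle, where `q₀+1 < ⌊(n₀-1)/2⌋`, one obtains a graph `G'` on `n₀+2` vertices
that is the edge-disjoint union of `q₀+2` spanning trees, in which `u₀, v₀, w₀` each have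
degree `q₀+3` and still span a triangle. -/
theorem stmt6 {V : Type*} [Fintype V] (n₀ q₀ : ℕ)
    (hcard : Fintype.card V = n₀) (hq : q₀ + 1 < (n₀ - 1) / 2)
    (G : SimpleGraph V) (T : Fin (q₀ + 1) → SimpleGraph V)
    (htree : ∀ i, (T i).IsTree)
    (hdisj : Pairwise fun i j => Disjoint (T i).edgeSet (T j).edgeSet)
    (hsup : (⨆ i, T i) = G)
    (u₀ v₀ w₀ : V) (huv : u₀ ≠ v₀) (hvw : v₀ ≠ w₀) (huw : u₀ ≠ w₀)
    (ha1 : G.Adj u₀ v₀) (ha2 : G.Adj v₀ w₀) (ha3 : G.Adj u₀ w₀)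
    (hd1 : (G.neighborSet u₀).ncard = q₀ + 2)
    (hd2 : (G.neighborSet v₀).ncard = q₀ + 2)
    (hd3 : (G.neighborSet w₀).ncard = q₀ + 2) :
    ∃ (G' : SimpleGraph (V ⊕ Fin 2)) (T' : Fin (q₀ + 2) → SimpleGraph (V ⊕ Fin 2)),
      (∀ i, (T' i).IsTree) ∧
      (Pairwise fun i j => Disjoint (T' i).edgeSet (T' j).edgeSet) ∧
      (⨆ i, T' i) = G' ∧
      G'.Adj (Sum.inl u₀) (Sum.inl v₀) ∧
      G'.Adj (Sum.inl v₀) (Sum.inl w₀) ∧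
      G'.Adj (Sum.inl u₀) (Sum.inl w₀) ∧
      (G'.neighborSet (Sum.inl u₀)).ncard = q₀ + 3 ∧
      (G'.neighborSet (Sum.inl v₀)).ncard = q₀ + 3 ∧
      (G'.neighborSet (Sum.inl w₀)).ncard = q₀ + 3 :=
  stmt6_general n₀ q₀ hcard hq G T htree hdisj hsup u₀ v₀ w₀ ha1 ha2 ha3 hd1 hd2 hd3
end

section
/- For all integers n and q with 2 < q+1 < ⌊(n-1)/2⌋, there exists a graph G on n vertices that is the edge-disjoint union of q+1 spanning trees and contains three vertices u₀, v₀, w₀ spanning a triangle, each of degree exactly q+2 in G. -/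
/-!
The trees live on the core vertices `aⱼ = j`, `bⱼ = q + 1 + j` (`j ≤ q`) as the double stars of
the classical decomposition of `K_{2q+2}`: tree `i` contains `aᵢbᵢ`, the edges `aᵢaⱼ`, `bᵢbⱼ` for
`j > i` and `aᵢbⱼ`, `bᵢaⱼ` for `j < i`. An `a`–`a` or `b`–`b` edge thus lies in the tree of its
smaller index and an `a`–`b` edge in the tree of its larger index, so the trees are edge-disjoint.
Every other vertex hangs on `aᵢ` in tree `i`, except that the corners `x, y, z = n-3, n-2, n-1`
are rerouted: in trees `0, 1, 2` the corner `y, z, x` hangs on `x, y, z` instead. Each corner then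
sees the other two corners and every `aᵢ` but one, i.e. `q + 2` vertices.

Each tree is given by parent pointers that strictly decrease a depth function, and a connected
graph whose edges are exactly the parent edges is a tree by counting edges.
-/

namespace SimpleGraph

variable {V : Type*} {G : SimpleGraph V}

theorem reachable_root_of_parent (f : V → V) (μ : V → ℕ) (r : V)
    (hμ : ∀ v, v ≠ r → μ (f v) < μ v) (hadj : ∀ v, v ≠ r → G.Adj v (f v)) (v : V) :
    G.Reachable v r := by
  induction v using (measure μ).wf.induction with
  | h v ih =>
    by_cases hv : v = r
    · exact hv ▸ Reachable.refl v
    · exact (hadj v hv).reachable.trans (ih (f v) (hμ v hv))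

theorem card_edgeSet_add_one_of_parent [Finite V] (f : V → V) (μ : V → ℕ) (r : V)
    (hμ : ∀ v, v ≠ r → μ (f v) < μ v) (hadj : ∀ v, v ≠ r → G.Adj v (f v))
    (hG : ∀ a b, G.Adj a b → (a ≠ r ∧ b = f a) ∨ (b ≠ r ∧ a = f b)) :
    Nat.card G.edgeSet + 1 = Nat.card V := by
  let e : {v // v ≠ r} → G.edgeSet := fun v => ⟨s(v, f v), hadj v v.2⟩
  have he : Function.Bijective e := by
    constructor
    · rintro ⟨v, hv⟩ ⟨w, hw⟩ h
      have h' : s(v, f v) = s(w, f w) := congrArg Subtype.val h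
      rcases Sym2.eq_iff.1 h' with ⟨h, -⟩ | ⟨hvw, hwv⟩
      · exact Subtype.ext h
      · have h₁ := hμ _ hv
        have h₂ := hμ _ hw
        rw [hwv] at h₁
        rw [← hvw] at h₂
        omega
    · rintro ⟨e, he⟩
      induction e using Sym2.ind with
      | _ a b =>
        rcases hG a b he with ⟨ha, rfl⟩ | ⟨hb, rfl⟩
        · exact ⟨⟨a, ha⟩, rfl⟩
        · exact ⟨⟨b, hb⟩, Subtype.ext Sym2.eq_swap⟩
  have := Fintype.ofFinite V
  classical
  rw [← Nat.card_congr (Equiv.ofBijective e he), Nat.card_eq_fintype_card,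
    Nat.card_eq_fintype_card, Fintype.card_subtype_compl, Fintype.card_subtype_eq]
  have := Fintype.card_pos_iff.2 ⟨r⟩
  omega

theorem isTree_of_parent [Finite V] (f : V → V) (μ : V → ℕ) (r : V)
    (hμ : ∀ v, v ≠ r → μ (f v) < μ v) (hadj : ∀ v, v ≠ r → G.Adj v (f v))
    (hG : ∀ a b, G.Adj a b → (a ≠ r ∧ b = f a) ∨ (b ≠ r ∧ a = f b)) : G.IsTree := by
  rw [isTree_iff_connected_and_card]
  refine ⟨(connected_iff_exists_forall_reachable G).2 ⟨r, fun v => ?_⟩,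
    card_edgeSet_add_one_of_parent f μ r hμ hadj hG⟩
  exact (reachable_root_of_parent f μ r hμ hadj v).symm

end SimpleGraph

namespace TreePacking

open SimpleGraph

def parent (n q i w : ℕ) : ℕ :=
  if w = i then i
  else if w ≤ q then (if i < w then i else q + 1 + i)
  else if w ≤ 2 * q + 1 then (if w ≤ q + 1 + i then i else q + 1 + i)
  else if i < 3 ∧ w = n - 3 + (i + 1) % 3 then n - 3 + i
  else i

def depth (n q i w : ℕ) : ℕ :=
  if w = i then 0 else if parent n q i w = i then 1 else 2

section Arithmetic

variable {n q i j w : ℕ}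

lemma parent_lt (hn : 2 * q + 5 ≤ n) (hi : i ≤ q) (hw : w < n) : parent n q i w < n := by
  unfold parent; split_ifs <;> omega

lemma depth_parent_lt (hn : 2 * q + 5 ≤ n) (hi : i ≤ q) (hw : w ≠ i) :
    depth n q i (parent n q i w) < depth n q i w := by
  unfold depth parent; split_ifs <;> omega

lemma eq_of_parent_eq (hi : i ≤ q) (hj : j ≤ q) (hw : w ≠ j)
    (h : parent n q i w = parent n q j w) : i = j := by
  unfold parent at h; split_ifs at h <;> omega

lemma ne_parent_of_eq_parent {a b : ℕ} (hi : i ≤ q) (hj : j ≤ q) (ha : a ≠ i) (hb : b ≠ j)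
    (hab : b = parent n q i a) : a ≠ parent n q j b := by
  unfold parent at *; split_ifs at * <;> omega

/-- `(t - (n - 3) + 2) % 3` is the tree in which the corner `t` hangs on another corner, so it is
the one `a`-vertex that `t` misses. -/
lemma exists_parent_corner_iff {t v : ℕ} (hn : 2 * q + 5 ≤ n) (hq : 2 ≤ q) (ht : n - 3 ≤ t)
    (htn : t < n) (hv : v < n) :
    (∃ i < q + 1, t ≠ v ∧ ((t ≠ i ∧ v = parent n q i t) ∨ (v ≠ i ∧ t = parent n q i v))) ↔
      t ≠ v ∧ (n - 3 ≤ v ∨ (v ≤ q ∧ v ≠ (t - (n - 3) + 2) % 3)) := by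
  constructor
  · rintro ⟨i, hi, htv, h⟩
    unfold parent at h
    refine ⟨htv, ?_⟩
    split_ifs at h <;> omega
  · rintro ⟨htv, hcorner | ⟨hvq, hvm⟩⟩
    · by_cases hs : v - (n - 3) = (t - (n - 3) + 1) % 3
      · refine ⟨t - (n - 3), by omega, htv, Or.inr ⟨by omega, ?_⟩⟩
        unfold parent; split_ifs <;> omega
      · refine ⟨v - (n - 3), by omega, htv, Or.inl ⟨by omega, ?_⟩⟩
        unfold parent; split_ifs <;> omega
    · refine ⟨v, by omega, htv, Or.inl ⟨by omega, ?_⟩⟩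
      unfold parent; split_ifs <;> omega

end Arithmetic

def tree (n q i : ℕ) : SimpleGraph (Fin n) :=
  fromRel fun a b => (a : ℕ) ≠ i ∧ (b : ℕ) = parent n q i a

variable {n q i j : ℕ}

theorem isTree_tree (hn : 2 * q + 5 ≤ n) (hi : i ≤ q) : (tree n q i).IsTree := by
  have hdepth (v : Fin n) (hv : (v : ℕ) ≠ i) :
      depth n q i (parent n q i v) < depth n q i v :=
    depth_parent_lt hn hi hv
  refine isTree_of_parent (fun v => ⟨parent n q i v, parent_lt hn hi v.2⟩)
    (fun v => depth n q i v) ⟨i, by omega⟩ (fun v hv => hdepth v (Fin.val_ne_iff.2 hv))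
    (fun v hv => ?_) (fun a b hab => ?_)
  · refine (fromRel_adj ..).2 ⟨fun h => ?_, Or.inl ⟨Fin.val_ne_iff.2 hv, rfl⟩⟩
    have hfix : (v : ℕ) = parent n q i v := congrArg Fin.val h
    have := hdepth v (Fin.val_ne_iff.2 hv)
    rw [← hfix] at this
    exact lt_irrefl _ this
  · simp only [tree, fromRel_adj, Fin.ext_iff, ne_eq] at hab ⊢
    exact hab.2

theorem disjoint_edgeSet_tree (hi : i ≤ q) (hj : j ≤ q) (hij : i ≠ j) :
    Disjoint (tree n q i).edgeSet (tree n q j).edgeSet := by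
  refine Set.disjoint_left.2 fun e hei hej => ?_
  induction e using Sym2.ind with
  | _ a b =>
    simp only [mem_edgeSet, tree, fromRel_adj] at hei hej
    rcases hei.2 with ⟨ha, hb⟩ | ⟨hb, ha⟩ <;> rcases hej.2 with ⟨ha', hb'⟩ | ⟨hb', ha'⟩
    · exact hij (eq_of_parent_eq hi hj ha' (hb ▸ hb'))
    · exact ne_parent_of_eq_parent hi hj ha hb' hb ha'
    · exact ne_parent_of_eq_parent hj hi ha' hb hb' ha
    · exact hij (eq_of_parent_eq hi hj hb' (ha ▸ ha'))

theorem iSup_tree_adj_corner_iff (hn : 2 * q + 5 ≤ n) (hq : 2 ≤ q) {t : Fin n}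
    (ht : n - 3 ≤ t) (v : Fin n) :
    (⨆ i : Fin (q + 1), tree n q i).Adj t v ↔
      (t : ℕ) ≠ v ∧ (n - 3 ≤ v ∨ (v ≤ q ∧ (v : ℕ) ≠ (t - (n - 3) + 2) % 3)) := by
  simp only [iSup_adj, tree, fromRel_adj, Fin.exists_iff, exists_prop, ← Fin.val_ne_iff]
  exact exists_parent_corner_iff hn hq ht t.2 v.2

theorem ncard_neighborSet_iSup_tree_corner (hn : 2 * q + 5 ≤ n) (hq : 2 ≤ q) {t : Fin n}
    (ht : n - 3 ≤ t) : ((⨆ i : Fin (q + 1), tree n q i).neighborSet t).ncard = q + 2 := by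
  set corners := (Finset.Ico (n - 3) n).erase t
  set core := (Finset.range (q + 1)).erase ((t - (n - 3) + 2) % 3)
  have hnbr : (⨆ i : Fin (q + 1), tree n q i).neighborSet t = Fin.val ⁻¹' ↑(corners ∪ core) := by
    ext v
    simp only [mem_neighborSet, iSup_tree_adj_corner_iff hn hq ht, Set.mem_preimage,
      Finset.coe_union, Set.mem_union, Finset.mem_coe, corners, core, Finset.mem_erase,
      Finset.mem_Ico, Finset.mem_range]
    omega
  have hdisj : Disjoint corners core := by
    simp only [corners, core, Finset.disjoint_left, Finset.mem_erase, Finset.mem_Ico,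
      Finset.mem_range]
    omega
  rw [hnbr, Set.ncard_preimage_of_injective_subset_range Fin.val_injective, Set.ncard_coe_finset,
    Finset.card_union_of_disjoint hdisj, Finset.card_erase_of_mem, Finset.card_erase_of_mem,
    Nat.card_Ico, Finset.card_range]
  · omega
  · simp only [Finset.mem_range]
    omega
  · simp only [Finset.mem_Ico]
    omega
  · intro v hv
    simp only [corners, core, Finset.coe_union, Set.mem_union, Finset.mem_coe, Finset.mem_erase,
      Finset.mem_Ico, Finset.mem_range] at hv
    exact ⟨⟨v, by omega⟩, rfl⟩

end TreePacking

open TreePacking in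
/-- For all integers `n` and `q` with `2 < q+1 < ⌊(n-1)/2⌋`, there is a graph `G` on `n`
vertices that is the edge-disjoint union of `q+1` spanning trees and contains three
vertices `u₀, v₀, w₀` spanning a triangle, each of degree exactly `q+2` in `G`. -/
theorem stmt7 (n q : ℕ) (hq2 : 2 < q + 1) (hq : q + 1 < (n - 1) / 2) :
    ∃ (G : SimpleGraph (Fin n)) (T : Fin (q + 1) → SimpleGraph (Fin n))
      (u₀ v₀ w₀ : Fin n),
      (∀ i, (T i).IsTree) ∧
      (Pairwise fun i j => Disjoint (T i).edgeSet (T j).edgeSet) ∧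
      (⨆ i, T i) = G ∧
      u₀ ≠ v₀ ∧ v₀ ≠ w₀ ∧ u₀ ≠ w₀ ∧
      G.Adj u₀ v₀ ∧ G.Adj v₀ w₀ ∧ G.Adj u₀ w₀ ∧
      (G.neighborSet u₀).ncard = q + 2 ∧
      (G.neighborSet v₀).ncard = q + 2 ∧
      (G.neighborSet w₀).ncard = q + 2 := by
  have hq' : 2 ≤ q := by omega
  have hn : 2 * q + 5 ≤ n := by omega
  obtain ⟨u₀, hu⟩ : ∃ u : Fin n, (u : ℕ) = n - 3 := ⟨⟨n - 3, by omega⟩, rfl⟩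
  obtain ⟨v₀, hv⟩ : ∃ v : Fin n, (v : ℕ) = n - 2 := ⟨⟨n - 2, by omega⟩, rfl⟩
  obtain ⟨w₀, hw⟩ : ∃ w : Fin n, (w : ℕ) = n - 1 := ⟨⟨n - 1, by omega⟩, rfl⟩
  have hadj {t v : Fin n} (ht : n - 3 ≤ t) (hv : n - 3 ≤ v) (htv : (t : ℕ) ≠ v) :=
    (iSup_tree_adj_corner_iff hn hq' ht v).2 ⟨htv, Or.inl hv⟩
  have hdeg {t : Fin n} (ht : n - 3 ≤ t) := ncard_neighborSet_iSup_tree_corner hn hq' ht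
  have hle (i : Fin (q + 1)) : (i : ℕ) ≤ q := Nat.lt_succ_iff.1 i.2
  refine ⟨_, fun i => tree n q i, u₀, v₀, w₀, fun i => isTree_tree hn (hle i),
    fun i j hij => disjoint_edgeSet_tree (hle i) (hle j) (Fin.val_ne_iff.2 hij), rfl,
    Fin.ne_of_val_ne (by omega), Fin.ne_of_val_ne (by omega), Fin.ne_of_val_ne (by omega),
    hadj (by omega) (by omega) (by omega), hadj (by omega) (by omega) (by omega),
    hadj (by omega) (by omega) (by omega), hdeg (by omega), hdeg (by omega), hdeg (by omega)⟩
end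

section
/- The edges {u₀u₁, u₀v₀, v₀w₀}, {v₀v₁, u₀w₀, w₀w₁}, and for each 2 ≤ i ≤ q the triples {u₀u_i, v₀v_i, w₀w_i}, together partition the edge set of the graph G' from the construction, and each of these q+1 triples of edges forms an acyclic subgraph (a forest) on U ∪ V ∪ W. -/
/-- The graph `G'` on vertex set `Fin 3 × Fin (q+1)`: the triangle on
`u₀ = (0,0)`, `v₀ = (1,0)`, `w₀ = (2,0)` plus the pendant edges
`u₀uᵢ`, `v₀vᵢ`, `w₀wᵢ` for `1 ≤ i ≤ q`. -/
def trioGraph (q : ℕ) : SimpleGraph (Fin 3 × Fin (q + 1)) :=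
  SimpleGraph.fromEdgeSet
    ({s(((0 : Fin 3), (0 : Fin (q + 1))), ((1 : Fin 3), (0 : Fin (q + 1)))),
      s(((1 : Fin 3), (0 : Fin (q + 1))), ((2 : Fin 3), (0 : Fin (q + 1)))),
      s(((0 : Fin 3), (0 : Fin (q + 1))), ((2 : Fin 3), (0 : Fin (q + 1))))} ∪
     {e | ∃ i : Fin (q + 1), i ≠ 0 ∧ ∃ j : Fin 3, e = s((j, (0 : Fin (q + 1))), (j, i))})

/-- The triple of edges assigned to index `i`:
`i = 0 ↦ {u₀u₁, u₀v₀, v₀w₀}`, `i = 1 ↦ {v₀v₁, u₀w₀, w₀w₁}`, and for `i ≥ 2`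
the triple `{u₀uᵢ, v₀vᵢ, w₀wᵢ}`. -/
def tripEdges (q : ℕ) (i : Fin (q + 1)) : Set (Sym2 (Fin 3 × Fin (q + 1))) :=
  if i = 0 then
    {s(((0 : Fin 3), (0 : Fin (q + 1))), ((0 : Fin 3), (1 : Fin (q + 1)))),
     s(((0 : Fin 3), (0 : Fin (q + 1))), ((1 : Fin 3), (0 : Fin (q + 1)))),
     s(((1 : Fin 3), (0 : Fin (q + 1))), ((2 : Fin 3), (0 : Fin (q + 1))))}
  else if i = 1 then
    {s(((1 : Fin 3), (0 : Fin (q + 1))), ((1 : Fin 3), (1 : Fin (q + 1)))),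
     s(((0 : Fin 3), (0 : Fin (q + 1))), ((2 : Fin 3), (0 : Fin (q + 1)))),
     s(((2 : Fin 3), (0 : Fin (q + 1))), ((2 : Fin 3), (1 : Fin (q + 1))))}
  else
    {s(((0 : Fin 3), (0 : Fin (q + 1))), ((0 : Fin 3), i)),
     s(((1 : Fin 3), (0 : Fin (q + 1))), ((1 : Fin 3), i)),
     s(((2 : Fin 3), (0 : Fin (q + 1))), ((2 : Fin 3), i))}

/-! A cycle has at least three distinct edges, so a cycle in a graph with at most three edges
is a triangle, and any two edges of a triangle meet. Each triple contains two vertex-disjoint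
edges (with different first coordinates), hence is a forest. The partition property is a
direct check of the edges. -/

namespace SimpleGraph

theorem Walk.exists_edges_eq_of_length_eq_three {V : Type*} {G : SimpleGraph V} {v : V}
    {c : G.Walk v v} (h : c.length = 3) : ∃ a b, c.edges = [s(v, a), s(a, b), s(b, v)] := by
  rcases c with _ | ⟨_, _ | ⟨_, _ | ⟨_, _ | ⟨_, _⟩⟩⟩⟩ <;> simp_all

theorem isAcyclic_of_edgeSet_subset_three_of_disjoint {V : Type*} {G : SimpleGraph V}
    {e₁ e₂ e₃ : Sym2 V} (hG : G.edgeSet ⊆ {e₁, e₂, e₃}) (h₁₃ : ∀ v ∈ e₁, v ∉ e₃) :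
    G.IsAcyclic := by
  classical
  intro v c hc
  have hsub : c.edges.toFinset ⊆ {e₁, e₂, e₃} := fun e he => by
    simpa using hG (c.edges_subset_edgeSet (List.mem_toFinset.mp he))
  have hcard : c.edges.toFinset.card = c.length := by
    rw [List.toFinset_card_of_nodup hc.edges_nodup, c.length_edges]
  have hlen : c.length = 3 := le_antisymm
    (hcard ▸ (Finset.card_le_card hsub).trans Finset.card_le_three) hc.three_le_length
  have hall : c.edges.toFinset = {e₁, e₂, e₃} :=
    Finset.eq_of_subset_of_card_le hsub (Finset.card_le_three.trans (hcard ▸ hlen).ge)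
  have h₁ : e₁ ∈ c.edges := List.mem_toFinset.mp (hall ▸ by simp)
  have h₃ : e₃ ∈ c.edges := List.mem_toFinset.mp (hall ▸ by simp)
  obtain ⟨a, b, hab⟩ := c.exists_edges_eq_of_length_eq_three hlen
  rw [hab] at h₁ h₃
  simp only [List.mem_cons, List.not_mem_nil, or_false] at h₁ h₃
  rcases h₁ with rfl | rfl | rfl <;> rcases h₃ with rfl | rfl | rfl <;> simp at h₁₃

end SimpleGraph

open SimpleGraph

variable {q : ℕ}

theorem pendant_mem_edgeSet_trioGraph (j : Fin 3) {k : Fin (q + 1)} (hk : k ≠ 0) :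
    s((j, 0), (j, k)) ∈ (trioGraph q).edgeSet := by
  rw [trioGraph, edgeSet_fromEdgeSet]
  exact ⟨Or.inr ⟨k, hk, j, rfl⟩, by simp [Prod.ext_iff, hk.symm]⟩

theorem triangle_mem_edgeSet_trioGraph {j j' : Fin 3} (h : j ≠ j') :
    s((j, 0), (j', 0)) ∈ (trioGraph q).edgeSet := by
  fin_cases j <;> fin_cases j' <;> simp_all [trioGraph, Sym2.eq_swap]

theorem isAcyclic_fromEdgeSet_tripEdges (i : Fin (q + 1)) :
    (fromEdgeSet (tripEdges q i)).IsAcyclic := by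
  have hsub : (fromEdgeSet (tripEdges q i)).edgeSet ⊆ tripEdges q i := by
    rw [edgeSet_fromEdgeSet]; exact Set.sdiff_subset
  unfold tripEdges at hsub ⊢
  split_ifs at hsub ⊢ <;> exact isAcyclic_of_edgeSet_subset_three_of_disjoint hsub (by simp)

variable [NeZero q]

theorem tripEdges_subset_edgeSet (i : Fin (q + 1)) : tripEdges q i ⊆ (trioGraph q).edgeSet := by
  unfold tripEdges
  split_ifs with hi0 hi1 <;> simp only [Set.insert_subset_iff, Set.singleton_subset_iff]
  · exact ⟨pendant_mem_edgeSet_trioGraph 0 Fin.zero_ne_one'.symm,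
      triangle_mem_edgeSet_trioGraph (by decide), triangle_mem_edgeSet_trioGraph (by decide)⟩
  · exact ⟨pendant_mem_edgeSet_trioGraph 1 (hi1 ▸ hi0), triangle_mem_edgeSet_trioGraph (by decide),
      pendant_mem_edgeSet_trioGraph 2 (hi1 ▸ hi0)⟩
  · exact ⟨pendant_mem_edgeSet_trioGraph 0 hi0, pendant_mem_edgeSet_trioGraph 1 hi0,
      pendant_mem_edgeSet_trioGraph 2 hi0⟩

theorem edgeSet_trioGraph_subset_iUnion_tripEdges :
    (trioGraph q).edgeSet ⊆ ⋃ i, tripEdges q i := by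
  rw [trioGraph, edgeSet_fromEdgeSet]
  rintro e ⟨(rfl | rfl | rfl) | ⟨i, hi0, j, rfl⟩, -⟩ <;> simp only [Set.mem_iUnion]
  · exact ⟨0, by simp [tripEdges]⟩
  · exact ⟨0, by simp [tripEdges]⟩
  · exact ⟨1, by simp [tripEdges, Fin.zero_ne_one'.symm]⟩
  by_cases hi1 : i = 1
  · subst hi1
    fin_cases j
    · exact ⟨0, by simp [tripEdges]⟩
    all_goals exact ⟨1, by simp [tripEdges, Fin.zero_ne_one'.symm]⟩
  · exact ⟨i, by fin_cases j <;> simp [tripEdges, hi0, hi1]⟩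

theorem iUnion_tripEdges : ⋃ i, tripEdges q i = (trioGraph q).edgeSet :=
  (Set.iUnion_subset tripEdges_subset_edgeSet).antisymm edgeSet_trioGraph_subset_iUnion_tripEdges

theorem pairwise_disjoint_tripEdges :
    Pairwise fun i j => Disjoint (tripEdges q i) (tripEdges q j) := by
  intro i j hij
  rw [Set.disjoint_left]
  intro e hi hj
  unfold tripEdges at hi hj
  split_ifs at hi hj <;> obtain rfl | rfl | rfl := hi <;>
    simp_all [Prod.ext_iff]

/-- The `q+1` triples of edges partition the edge set of `G'`, and each triple forms an
acyclic subgraph (a forest) on the whole vertex set. -/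
theorem stmt12 (q : ℕ) (hq : 2 ≤ q) :
    (⋃ i, tripEdges q i) = (trioGraph q).edgeSet ∧
    (Pairwise fun i j => Disjoint (tripEdges q i) (tripEdges q j)) ∧
    (∀ i, (SimpleGraph.fromEdgeSet (tripEdges q i)).IsAcyclic) := by
  have : NeZero q := ⟨by omega⟩
  exact ⟨iUnion_tripEdges, pairwise_disjoint_tripEdges, isAcyclic_fromEdgeSet_tripEdges⟩
end

section
/- In a graph G where two adjacent vertices u and v each have degree exactly q+1, consider the Waiter–Client game with parameter q on G. If Waiter ever offers all q+1 edges incident to u in one round, Client can pick uv and thereafter avoid all edges incident to v, so that {u,v} with the edge uv becomes an isolated component of Client's final graph; hence Client wins. -/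
/-! A formal model of the Waiter–Client game played on a board of edges.

A *history* records, for each completed round, the set of edges Waiter offered in that
round together with the edge Client chose.  A Waiter strategy maps a history to the next
offer; a Client strategy maps a history and the current offer to the chosen edge. -/

/-- A game history: the list of (offered edges, Client's chosen edge) of past rounds. -/
abbrev GameHistory (V : Type*) := List (Finset (Sym2 V) × Sym2 V)

/-- All edges Waiter has offered so far in a history. -/
def offeredSoFar {V : Type*} [DecidableEq V] (h : GameHistory V) : Finset (Sym2 V) :=
  h.foldr (fun p s => p.1 ∪ s) ∅

/-- The edges Client has kept so far in a history. -/
def keptEdges {V : Type*} (h : GameHistory V) : Set (Sym2 V) :=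
  {e | ∃ p ∈ h, p.2 = e}

/-- Client's graph: the graph of his kept edges. -/
def clientGraph {V : Type*} (h : GameHistory V) : SimpleGraph V :=
  SimpleGraph.fromEdgeSet (keptEdges h)

/-- A strategy for Waiter. -/
abbrev WaiterStrategy (V : Type*) := GameHistory V → Finset (Sym2 V)

/-- A strategy for Client. -/
abbrev ClientStrategy (V : Type*) := GameHistory V → Finset (Sym2 V) → Sym2 V

/-- The history obtained by playing `n` further rounds from initial history `h₀`,
Waiter using `w` and Client using `c`. -/
def playFrom {V : Type*} (h₀ : GameHistory V) (w : WaiterStrategy V) (c : ClientStrategy V) :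
    ℕ → GameHistory V
  | 0 => h₀
  | n + 1 =>
      playFrom h₀ w c n ++
        [(w (playFrom h₀ w c n), c (playFrom h₀ w c n) (w (playFrom h₀ w c n)))]

/-- Waiter plays legally (against Client strategy `c`, from `h₀`, for `r` rounds, with
parameter `q`, on the board `E`): each round he offers exactly `q+1` previously unoffered
edges of `E`. -/
def WaiterLegalFrom {V : Type*} [DecidableEq V] (E : Finset (Sym2 V)) (q r : ℕ)
    (h₀ : GameHistory V) (w : WaiterStrategy V) (c : ClientStrategy V) : Prop :=
  ∀ n < r, (w (playFrom h₀ w c n)).card = q + 1 ∧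
    w (playFrom h₀ w c n) ⊆ E ∧
    Disjoint (w (playFrom h₀ w c n)) (offeredSoFar (playFrom h₀ w c n))

/-- Client plays legally: in each round he chooses one of the offered edges. -/
def ClientLegalFrom {V : Type*} (h₀ : GameHistory V) (w : WaiterStrategy V)
    (c : ClientStrategy V) (r : ℕ) : Prop :=
  ∀ n < r, c (playFrom h₀ w c n) (w (playFrom h₀ w c n)) ∈ w (playFrom h₀ w c n)

/-- Client has a winning strategy in the game starting from history `h₀`, played for `r`
rounds with parameter `q` on board `E`: a strategy that is legal against every legal
Waiter strategy and always produces a disconnected final graph. -/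
def ClientWinsFrom {V : Type*} [DecidableEq V] (E : Finset (Sym2 V)) (q r : ℕ)
    (h₀ : GameHistory V) : Prop :=
  ∃ c : ClientStrategy V, ∀ w : WaiterStrategy V, WaiterLegalFrom E q r h₀ w c →
    ClientLegalFrom h₀ w c r ∧ ¬ (clientGraph (playFrom h₀ w c r)).Connected

section Aux
variable {V : Type*} [DecidableEq V]

lemma offeredSoFar_append_single (h : GameHistory V) (O : Finset (Sym2 V)) (e : Sym2 V) :
    offeredSoFar (h ++ [(O, e)]) = offeredSoFar h ∪ O := by
  induction h with
  | nil => simp [offeredSoFar]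
  | cons a t ih =>
      simp only [List.cons_append, offeredSoFar, List.foldr_cons] at *
      rw [ih, Finset.union_assoc]

lemma mem_playFrom {w : WaiterStrategy V} {c : ClientStrategy V} {n : ℕ}
    {p : Finset (Sym2 V) × Sym2 V} :
    p ∈ playFrom [] w c n ↔ ∃ m < n,
      p = (w (playFrom [] w c m), c (playFrom [] w c m) (w (playFrom [] w c m))) := by
  induction n with
  | zero => simp [playFrom]
  | succ n ih =>
      simp only [playFrom, List.mem_append, List.mem_singleton, ih]
      constructor
      · rintro (⟨m, hm, rfl⟩ | rfl)
        · exact ⟨m, Nat.lt_succ_of_lt hm, rfl⟩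
        · exact ⟨n, Nat.lt_succ_self n, rfl⟩
      · rintro ⟨m, hm, rfl⟩
        rcases Nat.lt_succ_iff_lt_or_eq.1 hm with h | rfl
        · exact Or.inl ⟨m, h, rfl⟩
        · exact Or.inr rfl

lemma offer_subset_offeredSoFar {w : WaiterStrategy V} {c : ClientStrategy V} {m n : ℕ}
    (hmn : m < n) :
    w (playFrom [] w c m) ⊆ offeredSoFar (playFrom [] w c n) := by
  induction n with
  | zero => omega
  | succ n ih =>
      rw [playFrom, offeredSoFar_append_single]
      rcases Nat.lt_succ_iff_lt_or_eq.1 hmn with h | rfl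
      · exact (ih h).trans Finset.subset_union_left
      · exact Finset.subset_union_right

/-- The avoiding strategy for Client. -/
noncomputable def avoidStrategy (E : Finset (Sym2 V)) (u v : V) : ClientStrategy V :=
  fun _ O => by
    classical
    exact if (∀ e ∈ E, u ∈ e → e ∈ O) then s(u, v)
      else if h2 : ∃ e, e ∈ O ∧ v ∉ e then h2.choose
      else if h3 : O.Nonempty then h3.choose
      else s(u, v)

lemma avoidStrategy_pos (E : Finset (Sym2 V)) (u v : V) (h : GameHistory V)
    (O : Finset (Sym2 V)) (hO : ∀ e ∈ E, u ∈ e → e ∈ O) :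
    avoidStrategy E u v h O = s(u, v) := by
  simp only [avoidStrategy]
  rw [if_pos hO]

lemma avoidStrategy_neg (E : Finset (Sym2 V)) (u v : V) (h : GameHistory V)
    (O : Finset (Sym2 V)) (hO : ¬ ∀ e ∈ E, u ∈ e → e ∈ O) (h2 : ∃ e, e ∈ O ∧ v ∉ e) :
    avoidStrategy E u v h O ∈ O ∧ v ∉ avoidStrategy E u v h O := by
  simp only [avoidStrategy]
  rw [if_neg hO, dif_pos h2]
  exact h2.choose_spec

lemma avoidStrategy_mem (E : Finset (Sym2 V)) (u v : V) (h : GameHistory V)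
    (O : Finset (Sym2 V)) (hO : O.Nonempty) (hsuv : s(u, v) ∈ E) :
    avoidStrategy E u v h O ∈ O := by
  simp only [avoidStrategy]
  by_cases h1 : ∀ e ∈ E, u ∈ e → e ∈ O
  · rw [if_pos h1]; exact h1 _ hsuv (Sym2.mem_mk_left u v)
  · rw [if_neg h1]
    by_cases h2 : ∃ e, e ∈ O ∧ v ∉ e
    · rw [dif_pos h2]; exact h2.choose_spec.1
    · rw [dif_neg h2, dif_pos hO]; exact hO.choose_spec

end Aux

/-- Let `u` and `v` be adjacent vertices of `G`, each of degree exactly `q+1`, and play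
the Waiter–Client game with parameter `q` on `G` (for `r` rounds covering all edges).
Client has a legal strategy such that, whenever Waiter at some round offers all `q+1`
edges incident to `u`, Client keeps the edge `uv` and thereafter avoids all edges
incident to `v`; consequently `{u, v}` together with the edge `uv` is an isolated
component of Client's final graph, and (as soon as there are more than two vertices)
Client wins. -/
theorem stmt17 {V : Type*} [DecidableEq V] (G : SimpleGraph V) (E : Finset (Sym2 V))
    (hE : (E : Set (Sym2 V)) = G.edgeSet) (q r : ℕ) (hr : E.card = r * (q + 1))
    (u v : V) (huv : G.Adj u v)
    (hdu : (G.neighborSet u).ncard = q + 1) (hdv : (G.neighborSet v).ncard = q + 1) :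
    ∃ c : ClientStrategy V, ∀ w : WaiterStrategy V, WaiterLegalFrom E q r [] w c →
      ClientLegalFrom [] w c r ∧
      ((∃ n < r, ∀ e ∈ E, u ∈ e → e ∈ w (playFrom [] w c n)) →
        s(u, v) ∈ keptEdges (playFrom [] w c r) ∧
        (∀ e ∈ keptEdges (playFrom [] w c r), (u ∈ e ∨ v ∈ e) → e = s(u, v)) ∧
        (2 < Nat.card V → ¬ (clientGraph (playFrom [] w c r)).Connected)) := by
  classical
  refine ⟨avoidStrategy E u v, fun w hW => ?_⟩
  have hsuvE : s(u, v) ∈ E := by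
    rw [← Finset.mem_coe, hE]; exact G.mem_edgeSet.2 huv
  set P : ℕ → GameHistory V := playFrom [] w (avoidStrategy E u v) with hPdef
  have hlegal : ClientLegalFrom [] w (avoidStrategy E u v) r := by
    intro n hn
    refine avoidStrategy_mem E u v _ _ (Finset.card_pos.1 ?_) hsuvE
    rw [(hW n hn).1]; omega
  refine ⟨hlegal, ?_⟩
  rintro ⟨n, hn, htrig⟩
  have hsn : s(u, v) ∈ w (P n) := htrig _ hsuvE (Sym2.mem_mk_left u v)
  have F2 : ∀ m < r, m ≠ n → ∀ e ∈ w (P m), u ∉ e := by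
    intro m hm hmn e he hue
    have heOn : e ∈ w (P n) := htrig e ((hW m hm).2.1 he) hue
    rcases lt_or_gt_of_ne hmn with h | h
    · exact Finset.disjoint_left.1 (hW n hn).2.2 heOn (offer_subset_offeredSoFar h he)
    · exact Finset.disjoint_left.1 (hW m hm).2.2 he (offer_subset_offeredSoFar h heOn)
  have F1 : ∀ m < r, m ≠ n → s(u, v) ∉ w (P m) :=
    fun m hm hmn hmem => F2 m hm hmn _ hmem (Sym2.mem_mk_left u v)
  have F3 : (E.filter (fun e => v ∈ e)).card = q + 1 := by
    have hset : ((E.filter (fun e => v ∈ e)) : Set (Sym2 V)) = G.incidenceSet v := by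
      ext e
      simp only [Finset.coe_filter, Finset.mem_coe, SimpleGraph.incidenceSet,
        Set.mem_setOf_eq, SimpleGraph.mem_edgeSet]
      rw [← Finset.mem_coe, hE]
    have h1 := Set.ncard_coe_finset (E.filter (fun e => v ∈ e))
    rw [hset] at h1
    have h2 : (G.incidenceSet v).ncard = (G.neighborSet v).ncard := by
      rw [← Nat.card_coe_set_eq, ← Nat.card_coe_set_eq]
      exact Nat.card_congr (G.incidenceSetEquivNeighborSet v)
    rw [← h1, h2, hdv]
  have F4 : ∀ m < r, m ≠ n → ∃ e, e ∈ w (P m) ∧ v ∉ e := by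
    intro m hm hmn
    by_contra hcon
    push_neg at hcon
    have hsub : w (P m) ⊆ (E.filter (fun e => v ∈ e)).erase s(u, v) := by
      intro e he
      exact Finset.mem_erase.2 ⟨fun h => F1 m hm hmn (h ▸ he),
        Finset.mem_filter.2 ⟨(hW m hm).2.1 he, hcon e he⟩⟩
    have hle := Finset.card_le_card hsub
    rw [(hW m hm).1, Finset.card_erase_of_mem
      (Finset.mem_filter.2 ⟨hsuvE, Sym2.mem_mk_right u v⟩), F3] at hle
    omega
  have F5a : avoidStrategy E u v (P n) (w (P n)) = s(u, v) := avoidStrategy_pos E u v _ _ htrig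
  have F5b : ∀ m < r, m ≠ n →
      v ∉ avoidStrategy E u v (P m) (w (P m)) ∧ u ∉ avoidStrategy E u v (P m) (w (P m)) := by
    intro m hm hmn
    have hnt : ¬ ∀ e ∈ E, u ∈ e → e ∈ w (P m) :=
      fun h => F1 m hm hmn (h _ hsuvE (Sym2.mem_mk_left u v))
    obtain ⟨hmem, hv⟩ := avoidStrategy_neg E u v (P m) (w (P m)) hnt (F4 m hm hmn)
    exact ⟨hv, F2 m hm hmn _ hmem⟩
  have hmain1 : s(u, v) ∈ keptEdges (P r) :=
    ⟨(w (P n), avoidStrategy E u v (P n) (w (P n))), mem_playFrom.2 ⟨n, hn, rfl⟩, F5a⟩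
  have hmain2 : ∀ e ∈ keptEdges (P r), (u ∈ e ∨ v ∈ e) → e = s(u, v) := by
    rintro e ⟨p, hp, rfl⟩ he
    obtain ⟨m, hm, rfl⟩ := mem_playFrom.1 hp
    rcases eq_or_ne m n with rfl | hmn
    · exact F5a
    · obtain ⟨hv, hu⟩ := F5b m hm hmn
      rcases he with h | h
      · exact absurd h hu
      · exact absurd h hv
  refine ⟨hmain1, hmain2, ?_⟩
  intro hcard hconn
  haveI : Finite V := Nat.finite_of_card_ne_zero (by omega)
  have hex : ∃ x : V, x ≠ u ∧ x ≠ v := by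
    by_contra hx
    push_neg at hx
    have hsub : (Set.univ : Set V) ⊆ {u, v} := by
      intro x _
      rcases eq_or_ne x u with rfl | h
      · exact Set.mem_insert _ _
      · exact Set.mem_insert_iff.2 (Or.inr (hx x h))
    have hle := Set.ncard_le_ncard hsub (Set.toFinite _)
    rw [Set.ncard_univ] at hle
    have h2 : ({u, v} : Set V).ncard ≤ 2 :=
      (Set.ncard_insert_le _ _).trans (by simp [Set.ncard_singleton])
    omega
  obtain ⟨x, hxu, hxv⟩ := hex
  have closed : ∀ a b : V, (clientGraph (P r)).Adj a b → (a = u ∨ a = v) → (b = u ∨ b = v) := by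
    intro a b hab ha
    rw [clientGraph, SimpleGraph.fromEdgeSet_adj] at hab
    have heq : s(a, b) = s(u, v) := by
      refine hmain2 _ hab.1 ?_
      rcases ha with rfl | rfl
      · exact Or.inl (Sym2.mem_mk_left a b)
      · exact Or.inr (Sym2.mem_mk_left a b)
    rw [Sym2.eq_iff] at heq
    tauto
  have key : ∀ (a b : V) (p : (clientGraph (P r)).Walk a b),
      (a = u ∨ a = v) → (b = u ∨ b = v) := by
    intro a b p
    induction p with
    | nil => exact id
    | cons h _ ih => intro ha; exact ih (closed _ _ h ha)
  obtain ⟨p⟩ := hconn.preconnected u x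
  rcases key u x p (Or.inl rfl) with rfl | rfl
  · exact hxu rfl
  · exact hxv rfl
end
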